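/- (The one-loop soliton satisfies the equation, Section 3, eq. (3.9).) Let ρ > 0 and y₀ ∈ ℝ, and define ê(y,t) = exp(−√3·ρ·(y + t/ρ² + y₀)) and q̂(y,t) = (1 + 2ê + ê²)/(1 − 4ê + ê²) = (1+ê)²/(1−4ê+ê²). Then at every point (y,t) with 1 − 4ê(y,t) + ê(y,t)² ≠ 0, the function q̂ satisfies ∂ₜ(∂_y q̂ / q̂) = q̂² − 1/q̂. -/

import Mathlib

noncomputable section

/-- The exponential soliton profile `ê(y,t) = exp(−√3·ρ·(y + t/ρ² + y₀))`. -/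
def ee (ρ y₀ : ℝ) (y t : ℝ) : ℝ :=
  Real.exp (-Real.sqrt 3 * ρ * (y + t / ρ ^ 2 + y₀))

/-- The one-loop soliton profile `q̂ = (1+ê)²/(1−4ê+ê²)`. -/
def qh (ρ y₀ : ℝ) (y t : ℝ) : ℝ :=
  (1 + ee ρ y₀ y t) ^ 2 / (1 - 4 * ee ρ y₀ y t + ee ρ y₀ y t ^ 2)

/-!
Write `q̂ = Q(ê)` with `Q = loopProfile`. Since `ê` is the exponential of the phase,
`∂_y ê = −√3ρ ê` and `∂_t ê = −(√3/ρ) ê`, so `∂_y q̂ / q̂ = −6√3ρ R(ê)` with `R = loopRate`, and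
`∂_t (∂_y q̂ / q̂) = 18 ê R'(ê)`; this is where `ρ ≠ 0` enters, through `√3ρ · √3/ρ = 3`.
The equation thereby becomes the polynomial identity
`18 e (1 − 2e + 6e² − 2e³ + e⁴) = (1+e)⁶ − (1−4e+e²)³`.
-/

open Filter Topology

def loopProfile (e : ℝ) : ℝ :=
  (1 + e) ^ 2 / (1 - 4 * e + e ^ 2)

def loopRate (e : ℝ) : ℝ :=
  e * (1 - e) / ((1 + e) * (1 - 4 * e + e ^ 2))

lemma qh_eq_loopProfile (ρ y₀ y t : ℝ) : qh ρ y₀ y t = loopProfile (ee ρ y₀ y t) := rfl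

lemma hasDerivAt_loopProfile {e : ℝ} (hD : 1 - 4 * e + e ^ 2 ≠ 0) :
    HasDerivAt loopProfile (6 * (1 + e) * (1 - e) / (1 - 4 * e + e ^ 2) ^ 2) e := by
  have hnum : HasDerivAt (fun e : ℝ => (1 + e) ^ 2) (2 * (1 + e)) e :=
    (((hasDerivAt_id' e).const_add 1).fun_pow 2).congr_deriv (by ring)
  have hden : HasDerivAt (fun e : ℝ => 1 - 4 * e + e ^ 2) (2 * e - 4) e :=
    ((((hasDerivAt_id' e).const_mul 4).const_sub 1).fun_add
      ((hasDerivAt_id' e).fun_pow 2)).congr_deriv (by ring)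
  exact (hnum.fun_div hden hD).congr_deriv (by field_simp; ring)

lemma hasDerivAt_loopRate {e : ℝ} (hM : (1 + e) * (1 - 4 * e + e ^ 2) ≠ 0) :
    HasDerivAt loopRate
      ((1 - 2 * e + 6 * e ^ 2 - 2 * e ^ 3 + e ^ 4) / ((1 + e) * (1 - 4 * e + e ^ 2)) ^ 2) e := by
  have hnum : HasDerivAt (fun e : ℝ => e * (1 - e)) (1 - 2 * e) e :=
    ((hasDerivAt_id' e).fun_mul ((hasDerivAt_id' e).const_sub 1)).congr_deriv (by ring)
  have hden : HasDerivAt (fun e : ℝ => (1 + e) * (1 - 4 * e + e ^ 2)) (3 * e ^ 2 - 6 * e - 3) e :=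
    (((hasDerivAt_id' e).const_add 1).fun_mul
      ((((hasDerivAt_id' e).const_mul 4).const_sub 1).fun_add
        ((hasDerivAt_id' e).fun_pow 2))).congr_deriv (by ring)
  exact (hnum.fun_div hden hM).congr_deriv (by ring)

lemma loopProfile_sq_sub_one_div (e : ℝ) :
    loopProfile e ^ 2 - 1 / loopProfile e
      = 18 * e *
        ((1 - 2 * e + 6 * e ^ 2 - 2 * e ^ 3 + e ^ 4) / ((1 + e) * (1 - 4 * e + e ^ 2)) ^ 2) := by
  unfold loopProfile
  field_simp
  ring

section soliton

variable (ρ y₀ : ℝ)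

lemma one_add_ee_ne_zero (y t : ℝ) : 1 + ee ρ y₀ y t ≠ 0 :=
  (add_pos one_pos (Real.exp_pos _)).ne'

lemma hasDerivAt_ee_y (y t : ℝ) :
    HasDerivAt (fun y' => ee ρ y₀ y' t) (-Real.sqrt 3 * ρ * ee ρ y₀ y t) y := by
  have hphase : HasDerivAt (fun y' : ℝ => -Real.sqrt 3 * ρ * (y' + t / ρ ^ 2 + y₀))
      (-Real.sqrt 3 * ρ) y := by
    simpa using (((hasDerivAt_id y).add_const (t / ρ ^ 2)).add_const y₀).const_mul
      (-Real.sqrt 3 * ρ)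
  simpa [ee, mul_comm] using hphase.exp

lemma hasDerivAt_ee_t (y t : ℝ) :
    HasDerivAt (fun t' => ee ρ y₀ y t') (-(Real.sqrt 3 / ρ) * ee ρ y₀ y t) t := by
  have hphase : HasDerivAt (fun t' : ℝ => -Real.sqrt 3 * ρ * (y + t' / ρ ^ 2 + y₀))
      (-(Real.sqrt 3 / ρ)) t := by
    refine ((((hasDerivAt_id' t).div_const (ρ ^ 2)).const_add y).add_const y₀).const_mul
      (-Real.sqrt 3 * ρ) |>.congr_deriv ?_
    rcases eq_or_ne ρ 0 with rfl | hρ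
    · simp
    · field_simp
  simpa [ee, mul_comm] using hphase.exp

lemma deriv_qh_y_div_qh {y t : ℝ} (hD : 1 - 4 * ee ρ y₀ y t + ee ρ y₀ y t ^ 2 ≠ 0) :
    deriv (fun y' => qh ρ y₀ y' t) y / qh ρ y₀ y t
      = -6 * (Real.sqrt 3 * ρ) * loopRate (ee ρ y₀ y t) := by
  have h1 := one_add_ee_ne_zero ρ y₀ y t
  change deriv (loopProfile ∘ fun y' => ee ρ y₀ y' t) y / loopProfile (ee ρ y₀ y t) = _
  rw [((hasDerivAt_loopProfile hD).comp y (hasDerivAt_ee_y ρ y₀ y t)).deriv]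
  unfold loopProfile loopRate
  field_simp

end soliton

/-- **The one-loop soliton satisfies the equation (Section 3, eq. (3.9)).** For
`ρ > 0`, `y₀ ∈ ℝ`, at every point where `1 − 4ê + ê² ≠ 0`, the function
`q̂ = (1+ê)²/(1−4ê+ê²)` satisfies `∂ₜ(∂_y q̂ / q̂) = q̂² − 1/q̂`. -/
theorem one_loop_soliton (ρ y₀ : ℝ) (hρ : 0 < ρ) :
    ∀ y t : ℝ, 1 - 4 * ee ρ y₀ y t + ee ρ y₀ y t ^ 2 ≠ 0 →
      deriv (fun t' => deriv (fun y' => qh ρ y₀ y' t') y / qh ρ y₀ y t') t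
        = qh ρ y₀ y t ^ 2 - 1 / qh ρ y₀ y t := by
  intro y t hD
  have hD_near : ∀ᶠ t' in 𝓝 t, 1 - 4 * ee ρ y₀ y t' + ee ρ y₀ y t' ^ 2 ≠ 0 := by
    have := (hasDerivAt_ee_t ρ y₀ y t).continuousAt
    exact ContinuousAt.eventually_ne (by fun_prop) hD
  have hlog : (fun t' => deriv (fun y' => qh ρ y₀ y' t') y / qh ρ y₀ y t')
      =ᶠ[𝓝 t] fun t' => -6 * (Real.sqrt 3 * ρ) * loopRate (ee ρ y₀ y t') := by
    filter_upwards [hD_near] with t' hD'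
    exact deriv_qh_y_div_qh ρ y₀ hD'
  have hrate := ((hasDerivAt_loopRate (mul_ne_zero (one_add_ee_ne_zero ρ y₀ y t) hD)).comp t
    (hasDerivAt_ee_t ρ y₀ y t)).const_mul (-6 * (Real.sqrt 3 * ρ))
  refine hlog.deriv_eq.trans (hrate.deriv.trans ?_)
  rw [qh_eq_loopProfile, loopProfile_sq_sub_one_div]
  have h3 : Real.sqrt 3 ^ 2 = 3 := Real.sq_sqrt (by norm_num)
  field_simp [hρ.ne']
  rw [h3]
  ring

end
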